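/- If G is a connected chordal graph and P is an induced path in G both of whose endpoints lie in the center C(G), then every vertex of P lies in C(G). -/

import Mathlib

/-!
In a chordal graph every disk `{v | d(v, x) ≤ k}` contains each induced path whose endpoints
it contains. Otherwise take a maximal stretch `w (a + 1), …, w (b - 1)` of the path outside the
disk. The vertices `w a`, `w b` together with the vertices at distance `< k` from `x` induce a
connected subgraph that avoids the closed neighbourhood of that stretch, and a shortest path
from `w a` to `w b` in it closes `w a, …, w b` into a chordless cycle of length at least `4`.
The center is the intersection of the disks of radius `grad G` around all vertices.
-/

open SimpleGraph

variable {V : Type*}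

noncomputable instance (priority := low) instFintypeSubsetOfFinite [Finite V] (s : Set V) :
    Fintype ↥s := Fintype.ofFinite _

/-- Eccentricity of a vertex: max distance to any vertex. -/
noncomputable def ecc [Fintype V] (G : SimpleGraph V) (x : V) : ℕ :=
  Finset.univ.sup (G.dist x)

/-- Radius: minimum eccentricity. -/
noncomputable def grad [Fintype V] (G : SimpleGraph V) : ℕ :=
  sInf (Set.range (ecc G))

/-- Diameter: maximum eccentricity. -/
noncomputable def gdiam [Fintype V] (G : SimpleGraph V) : ℕ :=
  Finset.univ.sup (ecc G)

/-- The center: vertices of minimum eccentricity. -/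
def center [Fintype V] (G : SimpleGraph V) : Set V :=
  {x | ecc G x = grad G}

/-- `G` has an induced cycle of length `n`. -/
def HasInducedCycle (G : SimpleGraph V) (n : ℕ) : Prop :=
  3 ≤ n ∧ ∃ f : ZMod n → V, Function.Injective f ∧
    ∀ i j : ZMod n, G.Adj (f i) (f j) ↔ (i = j + 1 ∨ j = i + 1)

/-- `G` is `k`-chordal: no induced cycle of length greater than `k`. -/
def KChordal (G : SimpleGraph V) (k : ℕ) : Prop :=
  ∀ n, k < n → ¬ HasInducedCycle G n

theorem Nat.exists_gap_around {P : ℕ → Prop} {i m : ℕ} (h0 : P 0) (hm : P m) (hi : i ≤ m)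
    (hPi : ¬ P i) :
    ∃ a b, a < i ∧ i < b ∧ b ≤ m ∧ P a ∧ P b ∧ ∀ j, a < j → j < b → ¬ P j := by
  classical
  have hex : ∃ b, i ≤ b ∧ P b := ⟨m, hi, hm⟩
  have ha : P (Nat.findGreatest P i) := Nat.findGreatest_spec (Nat.zero_le i) h0
  obtain ⟨hib, hb⟩ := Nat.find_spec hex
  refine ⟨Nat.findGreatest P i, Nat.find hex, ?_, ?_, Nat.find_min' hex ⟨hi, hm⟩, ha, hb, ?_⟩
  · exact (Nat.findGreatest_le i).lt_of_ne fun h => hPi (h ▸ ha)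
  · exact hib.lt_of_ne fun h => hPi (h ▸ hb)
  · intro j haj hjb hPj
    rcases le_or_gt j i with hji | hij
    · exact Nat.findGreatest_is_greatest haj hji hPj
    · exact Nat.find_min hex hjb ⟨hij.le, hPj⟩

structure IsInducedPath (G : SimpleGraph V) (p : ℕ → V) (l : ℕ) : Prop where
  injOn : Set.InjOn p (Set.Iic l)
  adj_iff {i j : ℕ} : i ≤ l → j ≤ l → (G.Adj (p i) (p j) ↔ i + 1 = j ∨ j + 1 = i)

section

variable {G : SimpleGraph V}

theorem hasInducedCycle_of_injOn {c : ℕ → V} {N : ℕ} (hN : 3 ≤ N)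
    (hinj : Set.InjOn c (Set.Iio N))
    (hadj : ∀ {i j}, i < N → j < N → (G.Adj (c i) (c j) ↔
      i + 1 = j ∨ j + 1 = i ∨ (i = 0 ∧ j + 1 = N) ∨ (j = 0 ∧ i + 1 = N))) :
    HasInducedCycle G N := by
  have : NeZero N := ⟨by omega⟩
  have hsucc : ∀ a b : ZMod N, a = b + 1 ↔ a.val = b.val + 1 ∨ (a.val = 0 ∧ b.val + 1 = N) := by
    intro a b
    rw [← (ZMod.val_injective N).eq_iff, ZMod.val_add, ZMod.val_one'' (by omega)]
    rcases (show b.val + 1 ≤ N from b.val_lt).lt_or_eq with h | h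
    · rw [Nat.mod_eq_of_lt h]; omega
    · rw [h, Nat.mod_self]; have := a.val_lt; omega
  refine ⟨hN, fun z => c z.val, fun a b h => ZMod.val_injective N (hinj a.val_lt b.val_lt h),
    fun a b => ?_⟩
  rw [hadj a.val_lt b.val_lt, hsucc, hsucc]
  omega

namespace IsInducedPath

variable {p : ℕ → V} {l : ℕ}

theorem two_le_iff (hp : IsInducedPath G p l) :
    2 ≤ l ↔ p 0 ≠ p l ∧ ¬ G.Adj (p 0) (p l) := by
  rw [Ne, hp.injOn.eq_iff (Nat.zero_le l) Set.self_mem_Iic, hp.adj_iff (Nat.zero_le l) le_rfl]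
  omega

theorem map {W : Type*} {H : SimpleGraph W} (f : G ↪g H) (hp : IsInducedPath G p l) :
    IsInducedPath H (f ∘ p) l where
  injOn := f.injective.comp_injOn hp.injOn
  adj_iff hi hj := f.map_adj_iff.trans (hp.adj_iff hi hj)

theorem segment (hp : IsInducedPath G p l) {a d : ℕ} (h : a + d ≤ l) :
    IsInducedPath G (fun j => p (a + j)) d where
  injOn i (hi : i ≤ d) j (hj : j ≤ d) hij := by
    have := hp.injOn (show a + i ≤ l by omega) (show a + j ≤ l by omega) hij
    omega
  adj_iff hi hj := (hp.adj_iff (by omega) (by omega)).trans (by omega)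

theorem of_fin {n : ℕ} {f : Fin (n + 1) → V}
    (hinj : Function.Injective f)
    (hadj : ∀ i j : Fin (n + 1), G.Adj (f i) (f j) ↔ ((i : ℕ) + 1 = j ∨ (j : ℕ) + 1 = i)) :
    IsInducedPath G (fun j => f (Fin.ofNat (n + 1) j)) n where
  injOn i (hi : i ≤ n) j (hj : j ≤ n) hij := by
    simpa [Nat.mod_eq_of_lt (Nat.lt_succ_of_le hi), Nat.mod_eq_of_lt (Nat.lt_succ_of_le hj)]
      using congrArg Fin.val (hinj hij)
  adj_iff hi hj := by
    rw [hadj, Fin.val_ofNat, Fin.val_ofNat, Nat.mod_eq_of_lt (Nat.lt_succ_of_le hi),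
      Nat.mod_eq_of_lt (Nat.lt_succ_of_le hj)]

theorem hasInducedCycle_append {q : ℕ → V} {r : ℕ}
    (hp : IsInducedPath G p l) (hq : IsInducedPath G q r) (hl : 2 ≤ l) (hr : 2 ≤ r)
    (h0 : q 0 = p 0) (hqr : q r = p l)
    (hsep : ∀ j, 0 < j → j < r → ∀ i, 0 < i → i < l → q j ≠ p i ∧ ¬ G.Adj (q j) (p i)) :
    HasInducedCycle G (l + r) := by
  have hmixed : ∀ i ≤ l, ∀ j, 0 < j → j < r →
      q j ≠ p i ∧ (G.Adj (q j) (p i) ↔ (j = 1 ∧ i = 0) ∨ (j + 1 = r ∧ i = l)) := by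
    intro i hi j hj0 hjr
    rcases Nat.eq_zero_or_pos i with rfl | hi0
    · rw [Ne, ← h0, hq.injOn.eq_iff (show j ≤ r by omega) (Nat.zero_le r),
        hq.adj_iff (show j ≤ r by omega) (Nat.zero_le r)]
      omega
    rcases hi.lt_or_eq with hil | rfl
    · have := hsep j hj0 hjr i hi0 hil
      exact ⟨this.1, iff_of_false this.2 (by omega)⟩
    · rw [Ne, ← hqr, hq.injOn.eq_iff (show j ≤ r by omega) Set.self_mem_Iic,
        hq.adj_iff (show j ≤ r by omega) le_rfl]
      omega
  set c : ℕ → V := fun i => if i ≤ l then p i else q (l + r - i)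
  have hc : ∀ {i j}, i < l + r → j < l + r → (c i = c j ↔ i = j) ∧ (G.Adj (c i) (c j) ↔
      i + 1 = j ∨ j + 1 = i ∨ (i = 0 ∧ j + 1 = l + r) ∨ (j = 0 ∧ i + 1 = l + r)) := by
    intro i j hi hj
    by_cases hil : i ≤ l <;> by_cases hjl : j ≤ l <;> simp only [c, hil, hjl, if_true, if_false]
    · rw [hp.injOn.eq_iff hil hjl, hp.adj_iff hil hjl]
      omega
    · obtain ⟨hne, hadj⟩ := hmixed i hil (l + r - j) (by omega) (by omega)
      rw [eq_comm, G.adj_comm, hadj, iff_false_intro hne]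
      grind
    · obtain ⟨hne, hadj⟩ := hmixed j hjl (l + r - i) (by omega) (by omega)
      rw [hadj, iff_false_intro hne]
      grind
    · rw [hq.injOn.eq_iff (show l + r - i ≤ r by omega) (show l + r - j ≤ r by omega),
        hq.adj_iff (by omega) (by omega)]
      omega
  exact hasInducedCycle_of_injOn (by omega) (fun i hi j hj h => (hc hi hj).1.1 h)
    fun hi hj => (hc hi hj).2

end IsInducedPath

namespace SimpleGraph

namespace Walk

variable {u v : V}

theorem dist_getVert_getVert (q : G.Walk u v) (hq : q.length = G.dist u v) {i j : ℕ}
    (hij : i ≤ j) (hj : j ≤ q.length) : G.dist (q.getVert i) (q.getVert j) = j - i := by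
  have h := length_eq_dist_of_subwalk hq (((q.take j).isSubwalk_drop i).trans (q.isSubwalk_take j))
  simp only [take_getVert, min_eq_right hij] at h
  rw [← h, drop_length, take_length, min_eq_left hj]

theorem isInducedPath_getVert (q : G.Walk u v) (hq : q.length = G.dist u v) :
    IsInducedPath G q.getVert q.length where
  injOn := by
    have hinj_le : ∀ i j, i ≤ j → j ≤ q.length → q.getVert i = q.getVert j → i = j := by
      intro i j hij hj h
      have := q.dist_getVert_getVert hq hij hj
      rw [h, dist_self] at this
      omega
    intro i (hi : i ≤ q.length) j (hj : j ≤ q.length) h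
    rcases le_total i j with hij | hji
    exacts [hinj_le i j hij hj h, (hinj_le j i hji hi h.symm).symm]
  adj_iff {i j} hi hj := by
    rw [← dist_eq_one_iff_adj]
    rcases le_total i j with hij | hji
    · rw [q.dist_getVert_getVert hq hij hj]; omega
    · rw [dist_comm, q.dist_getVert_getVert hq hji hi]; omega

end Walk

theorem Connected.reachable_induce_of_dist_lt (hG : G.Connected) {S : Set V} {v x : V}
    (hv : v ∈ S) (hx : x ∈ S) (hS : ∀ u, G.dist u x < G.dist v x → u ∈ S) :
    (G.induce S).Reachable ⟨v, hv⟩ ⟨x, hx⟩ := by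
  obtain ⟨q, hq⟩ := hG.exists_walk_length_eq_dist v x
  refine ⟨q.induce S fun u hu => ?_⟩
  obtain ⟨i, rfl, hi⟩ := Walk.mem_support_iff_exists_getVert.1 hu
  rcases i.eq_zero_or_pos with rfl | hi0
  · simpa using hv
  · apply hS
    have := q.dist_getVert_getVert hq hi le_rfl
    rw [Walk.getVert_length] at this
    omega

end SimpleGraph

theorem KChordal.not_reachable_induce (hch : KChordal G 3) {p : ℕ → V}
    {l : ℕ} (hp : IsInducedPath G p l) (hl : 2 ≤ l) {S : Set V} (hp0 : p 0 ∈ S) (hpl : p l ∈ S)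
    (hS : ∀ v ∈ S, v ≠ p 0 → v ≠ p l → ∀ i, 0 < i → i < l → v ≠ p i ∧ ¬ G.Adj v (p i)) :
    ¬ (G.induce S).Reachable ⟨p 0, hp0⟩ ⟨p l, hpl⟩ := by
  intro hreach
  obtain ⟨g, hg⟩ := hreach.exists_walk_length_eq_dist
  have hq := (g.isInducedPath_getVert hg).map (Embedding.induce S)
  set q : ℕ → V := Embedding.induce S ∘ g.getVert
  have hq0 : q 0 = p 0 := by simp [q]
  have hqr : q g.length = p l := by simp [q]
  have hr : 2 ≤ g.length := hq.two_le_iff.2 (by rw [hq0, hqr]; exact hp.two_le_iff.1 hl)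
  refine hch _ (by omega) (hp.hasInducedCycle_append hq hl hr hq0 hqr
    fun j hj0 hjr => hS _ (g.getVert j).2 ?_ ?_)
  · exact hq0 ▸ hq.injOn.ne (show j ≤ g.length by omega) (Nat.zero_le _) hj0.ne'
  · exact hqr ▸ hq.injOn.ne (show j ≤ g.length by omega) Set.self_mem_Iic hjr.ne

theorem KChordal.dist_le_of_isInducedPath (hch : KChordal G 3)
    (hG : G.Connected) {w : ℕ → V} {m : ℕ} (hw : IsInducedPath G w m) {x : V} {k : ℕ}
    (h0 : G.dist (w 0) x ≤ k) (hm : G.dist (w m) x ≤ k) {i : ℕ} (hi : i ≤ m) :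
    G.dist (w i) x ≤ k := by
  by_contra hik
  obtain ⟨a, b, hai, hib, hbm, ha, hb, hout⟩ :=
    Nat.exists_gap_around (P := fun j => G.dist (w j) x ≤ k) h0 hm hi hik
  obtain ⟨d, rfl⟩ := Nat.exists_eq_add_of_le (hai.trans hib).le
  set S : Set V := {v | v = w a ∨ v = w (a + d) ∨ G.dist v x < k}
  have hx : x ∈ S := by
    rcases eq_or_ne (w a) x with h | h
    · exact Or.inl h.symm
    · exact Or.inr (Or.inr (by rw [dist_self]; exact (hG.pos_dist_of_ne h).trans_le ha))
  have hreach_a := hG.reachable_induce_of_dist_lt (S := S) (Or.inl rfl) hx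
    fun u hu => Or.inr (Or.inr (by omega))
  have hreach_b := hG.reachable_induce_of_dist_lt (S := S) (Or.inr (Or.inl rfl)) hx
    fun u hu => Or.inr (Or.inr (by omega))
  refine hch.not_reachable_induce (hw.segment hbm) (by omega) (Or.inl rfl) (Or.inr (Or.inl rfl))
    ?_ (hreach_a.trans hreach_b.symm)
  rintro v (rfl | rfl | hv) hva hvb j hj0 hjd
  · exact absurd rfl hva
  · exact absurd rfl hvb
  have hfar : k < G.dist (w (a + j)) x := not_le.1 (hout _ (by omega) (by omega))
  refine ⟨?_, fun hadj => ?_⟩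
  · rintro rfl
    omega
  · have := hG.dist_triangle (u := w (a + j)) (v := v) (w := x)
    rw [dist_eq_one_iff_adj.2 hadj.symm] at this
    omega

end

theorem mem_center_iff_forall_dist_le [Fintype V] {G : SimpleGraph V} {x : V} :
    x ∈ _root_.center G ↔ ∀ y, G.dist x y ≤ grad G := by
  have hgrad : grad G ≤ ecc G x := Nat.sInf_le ⟨x, rfl⟩
  calc x ∈ _root_.center G ↔ ecc G x ≤ grad G := ⟨le_of_eq, fun h => h.antisymm hgrad⟩
    _ ↔ ∀ y, G.dist x y ≤ grad G := by simp [ecc, Finset.sup_le_iff]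

theorem induced_path_in_center [Fintype V] (G : SimpleGraph V) (hG : G.Connected)
    (hch : KChordal G 3) (n : ℕ) (f : Fin (n + 1) → V) (hinj : Function.Injective f)
    (hadj : ∀ i j : Fin (n + 1), G.Adj (f i) (f j) ↔ ((i : ℕ) + 1 = j ∨ (j : ℕ) + 1 = i))
    (h0 : f 0 ∈ _root_.center G) (hlast : f (Fin.last n) ∈ _root_.center G) :
    ∀ i, f i ∈ _root_.center G := by
  intro i
  rw [mem_center_iff_forall_dist_le] at h0 hlast ⊢
  intro y
  simpa using hch.dist_le_of_isInducedPath hG (IsInducedPath.of_fin hinj hadj)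
    (by simpa using h0 y) (by simpa using hlast y) i.is_le
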